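/- Let f : ℝ^d → ℝ be differentiable with L-Lipschitz gradient and let ν > 0. Then for every x ∈ ℝ^d, ‖∇f_ν(x) − ∇f(x)‖ ≤ (ν/2) · L · (d + 3)^{3/2}. -/

import Mathlib

open MeasureTheory ProbabilityTheory

/-- The standard Gaussian measure `N(0, I_d)` on `ℝ^d = EuclideanSpace ℝ (Fin d)`. -/
noncomputable def stdGaussian (d : ℕ) : Measure (EuclideanSpace ℝ (Fin d)) :=
  (Measure.pi fun _ : Fin d => gaussianReal 0 1).map
    (MeasurableEquiv.toLp 2 (Fin d → ℝ))

/-- The Gaussian smoothing `f_ν(x) = E_{u ∼ N(0,I_d)}[f(x + ν u)]`. -/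
noncomputable def gaussianSmoothing (d : ℕ) (f : EuclideanSpace ℝ (Fin d) → ℝ) (ν : ℝ)
    (x : EuclideanSpace ℝ (Fin d)) : ℝ :=
  ∫ u, f (x + ν • u) ∂(stdGaussian d)

/-!
A Lipschitz derivative makes `f` grow at most quadratically, so for any law `μ` with finite
second moment one may differentiate `x ↦ ∫ f (x + ν • u) ∂μ` under the integral sign, giving
`∇f_ν(x) = E[∇f(x + ν u)]`. Hence `‖∇f_ν(x) - ∇f(x)‖ ≤ E‖∇f(x + ν u) - ∇f(x)‖ ≤ L ν E‖u‖`,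
and for the standard Gaussian `E‖u‖ ≤ √(E‖u‖²) = √d ≤ (d + 3)^{3/2} / 2`.
-/

open Metric
open scoped NNReal RealInnerProductSpace

section Smoothing

variable {E F : Type*} [NormedAddCommGroup E] [NormedSpace ℝ E]
  [NormedAddCommGroup F] [NormedSpace ℝ F] {f : E → F} {K : ℝ≥0}

lemma norm_fderiv_le_of_lipschitzWith (hf' : LipschitzWith K (fderiv ℝ f)) (x y : E) :
    ‖fderiv ℝ f y‖ ≤ ‖fderiv ℝ f x‖ + K * ‖y - x‖ :=
  calc ‖fderiv ℝ f y‖ ≤ ‖fderiv ℝ f x‖ + ‖fderiv ℝ f y - fderiv ℝ f x‖ := norm_le_insert' _ _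
    _ ≤ ‖fderiv ℝ f x‖ + K * ‖y - x‖ := by grw [hf'.norm_sub_le y x]

lemma norm_sub_le_of_lipschitzWith_fderiv (hf : Differentiable ℝ f)
    (hf' : LipschitzWith K (fderiv ℝ f)) (x y : E) :
    ‖f y - f x‖ ≤ (‖fderiv ℝ f x‖ + K * ‖y - x‖) * ‖y - x‖ := by
  refine (convex_closedBall x ‖y - x‖).norm_image_sub_le_of_norm_fderiv_le (fun z _ => hf z)
    (fun z hz => ?_) (mem_closedBall_self (norm_nonneg _))
    (by rw [mem_closedBall, dist_eq_norm])
  rw [mem_closedBall, dist_eq_norm] at hz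
  exact (norm_fderiv_le_of_lipschitzWith hf' x z).trans (by gcongr)

variable [MeasurableSpace E] [BorelSpace E] [SecondCountableTopology E] {μ : Measure E}

lemma integrable_comp_add_smul [IsFiniteMeasure μ] (hμ : MemLp id 2 μ)
    (hf : Differentiable ℝ f) (hf' : LipschitzWith K (fderiv ℝ f)) (x : E) (ν : ℝ) :
    Integrable (fun u => f (x + ν • u)) μ := by
  refine Integrable.mono'
    (g := fun u => ‖f x‖ + (‖fderiv ℝ f x‖ * |ν|) * ‖u‖ + (K * ν ^ 2) * ‖u‖ ^ 2)
    (((integrable_const _).add ((hμ.integrable one_le_two).norm.const_mul _)).add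
      ((hμ.integrable_norm_pow two_ne_zero).const_mul _))
    ((hf.continuous.comp
      (continuous_const.add (continuous_const.smul continuous_id))).aestronglyMeasurable)
    (ae_of_all _ fun u => ?_)
  have hgrowth := norm_sub_le_of_lipschitzWith_fderiv hf hf' x (x + ν • u)
  rw [add_sub_cancel_left, norm_smul, Real.norm_eq_abs] at hgrowth
  calc ‖f (x + ν • u)‖ ≤ ‖f x‖ + ‖f (x + ν • u) - f x‖ := norm_le_insert' _ _
    _ ≤ _ := by grw [hgrowth, ← sq_abs ν]; exact le_of_eq (by ring)

lemma integrable_fderiv_comp_add_smul [IsFiniteMeasure μ] (hμ : MemLp id 2 μ)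
    (hf' : LipschitzWith K (fderiv ℝ f)) (x : E) (ν : ℝ) :
    Integrable (fun u => fderiv ℝ f (x + ν • u)) μ := by
  refine Integrable.mono' (g := fun u => ‖fderiv ℝ f x‖ + (K * |ν|) * ‖u‖)
    ((integrable_const _).add ((hμ.integrable one_le_two).norm.const_mul _))
    ((hf'.continuous.comp
      (continuous_const.add (continuous_const.smul continuous_id))).aestronglyMeasurable)
    (ae_of_all _ fun u => ?_)
  have := norm_fderiv_le_of_lipschitzWith hf' x (x + ν • u)
  rwa [add_sub_cancel_left, norm_smul, Real.norm_eq_abs, ← mul_assoc] at this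

lemma hasFDerivAt_integral_comp_add_smul [CompleteSpace F] [IsFiniteMeasure μ]
    (hμ : MemLp id 2 μ) (hf : Differentiable ℝ f) (hf' : LipschitzWith K (fderiv ℝ f))
    (x : E) (ν : ℝ) :
    HasFDerivAt (fun y => ∫ u, f (y + ν • u) ∂μ) (∫ u, fderiv ℝ f (x + ν • u) ∂μ) x := by
  refine hasFDerivAt_integral_of_dominated_of_fderiv_le (ball_mem_nhds x one_pos)
    (F' := fun y u => fderiv ℝ f (y + ν • u))
    (bound := fun u => ‖fderiv ℝ f x‖ + K * (1 + |ν| * ‖u‖))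
    (.of_forall fun y => (hf.continuous.comp
      (continuous_const.add (continuous_const.smul continuous_id))).aestronglyMeasurable)
    (integrable_comp_add_smul hμ hf hf' x ν)
    (integrable_fderiv_comp_add_smul hμ hf' x ν).aestronglyMeasurable
    (ae_of_all _ fun u y hy => ?_)
    ((integrable_const _).add
      (((integrable_const _).add ((hμ.integrable one_le_two).norm.const_mul _)).const_mul _))
    (ae_of_all _ fun u y _ => (hasFDerivAt_comp_add_right (ν • u)).2 (hf _).hasFDerivAt)
  rw [mem_ball, dist_eq_norm] at hy
  have hdist : ‖y + ν • u - x‖ ≤ 1 + |ν| * ‖u‖ := by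
    rw [add_sub_right_comm, ← Real.norm_eq_abs, ← norm_smul]
    exact (norm_add_le _ _).trans (by gcongr)
  exact (norm_fderiv_le_of_lipschitzWith hf' x _).trans (by gcongr)

lemma norm_fderiv_integral_comp_add_smul_sub_le [CompleteSpace F] [IsProbabilityMeasure μ]
    (hμ : MemLp id 2 μ) (hf : Differentiable ℝ f) (hf' : LipschitzWith K (fderiv ℝ f))
    (x : E) (ν : ℝ) :
    ‖fderiv ℝ (fun y => ∫ u, f (y + ν • u) ∂μ) x - fderiv ℝ f x‖ ≤ K * |ν| * ∫ u, ‖u‖ ∂μ := by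
  have hsub : ∫ u, fderiv ℝ f (x + ν • u) ∂μ - fderiv ℝ f x
      = ∫ u, (fderiv ℝ f (x + ν • u) - fderiv ℝ f x) ∂μ := by
    rw [integral_sub (integrable_fderiv_comp_add_smul hμ hf' x ν) (integrable_const _),
      integral_const, probReal_univ, one_smul]
  rw [(hasFDerivAt_integral_comp_add_smul hμ hf hf' x ν).fderiv, hsub, ← integral_const_mul]
  refine norm_integral_le_of_norm_le ((hμ.integrable one_le_two).norm.const_mul _)
    (ae_of_all _ fun u => ?_)
  have := hf'.norm_sub_le (x + ν • u) x
  rwa [add_sub_cancel_left, norm_smul, Real.norm_eq_abs, ← mul_assoc] at this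

end Smoothing

section StdGaussian

variable {E : Type*} [NormedAddCommGroup E] [InnerProductSpace ℝ E] [FiniteDimensional ℝ E]
  [MeasurableSpace E] [BorelSpace E]

lemma integral_inner_mul_inner_stdGaussian (x y : E) :
    ∫ z, ⟪x, z⟫ * ⟪y, z⟫ ∂(ProbabilityTheory.stdGaussian E) = ⟪x, y⟫ := by
  have := covarianceBilin_apply (IsGaussian.memLp_two_id (μ := ProbabilityTheory.stdGaussian E))
    x y
  rw [covarianceBilin_stdGaussian, innerSL_apply_apply] at this
  simp only [id, integral_id_stdGaussian, sub_zero] at this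
  exact this.symm

lemma integral_norm_sq_stdGaussian :
    ∫ z, ‖z‖ ^ 2 ∂(ProbabilityTheory.stdGaussian E) = Module.finrank ℝ E := by
  let b := stdOrthonormalBasis ℝ E
  have hint (i) : Integrable (fun z => ⟪b i, z⟫ * ⟪b i, z⟫) (ProbabilityTheory.stdGaussian E) :=
    let hi := IsGaussian.memLp_two_id.continuousLinearMap_comp (innerSL ℝ (b i))
    hi.integrable_mul hi
  simp_rw [← b.sum_sq_norm_inner_right, Real.norm_eq_abs, sq_abs, sq]
  rw [integral_finsetSum _ fun i _ => hint i]
  simp [integral_inner_mul_inner_stdGaussian, b.orthonormal.1]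

lemma integral_norm_stdGaussian_le :
    ∫ z, ‖z‖ ∂(ProbabilityTheory.stdGaussian E) ≤ √(Module.finrank ℝ E) := by
  have hnorm : MemLp (fun z : E => ‖z‖) 2 (ProbabilityTheory.stdGaussian E) :=
    IsGaussian.memLp_two_id.norm
  have hvar := variance_nonneg (fun z : E => ‖z‖) (ProbabilityTheory.stdGaussian E)
  rw [variance_eq_sub hnorm] at hvar
  simp only [Pi.pow_apply, integral_norm_sq_stdGaussian] at hvar
  exact Real.le_sqrt_of_sq_le (by linarith)

end StdGaussian

lemma lipschitzWith_fderiv_iff_gradient {E : Type*} [NormedAddCommGroup E]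
    [InnerProductSpace ℝ E] [CompleteSpace E] {f : E → ℝ} {K : ℝ≥0} :
    LipschitzWith K (fderiv ℝ f) ↔ LipschitzWith K (gradient f) := by
  rw [← toDual_comp_gradient]
  exact (InnerProductSpace.toDual ℝ E).isometry.lipschitzWith_iff K

lemma norm_gradient_sub_gradient_eq_norm_fderiv_sub {E : Type*} [NormedAddCommGroup E] [InnerProductSpace ℝ E]
    [CompleteSpace E] (f g : E → ℝ) (x : E) :
    ‖gradient g x - gradient f x‖ = ‖fderiv ℝ g x - fderiv ℝ f x‖ := by
  rw [gradient, gradient, ← map_sub, LinearIsometryEquiv.norm_map]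

lemma two_mul_sqrt_le_add_three_rpow {x : ℝ} (hx : 0 ≤ x) :
    2 * √x ≤ (x + 3) ^ ((3 : ℝ) / 2) :=
  calc 2 * √x ≤ x + 1 := by nlinarith [Real.sq_sqrt hx, sq_nonneg (√x - 1)]
    _ ≤ (x + 3) ^ (1 : ℝ) := by rw [Real.rpow_one]; linarith
    _ ≤ (x + 3) ^ ((3 : ℝ) / 2) := Real.rpow_le_rpow_of_exponent_le (by linarith) (by norm_num)

/-- If `f : ℝ^d → ℝ` is differentiable with `L`-Lipschitz gradient and
`ν > 0`, then for every `x`, `‖∇f_ν(x) − ∇f(x)‖ ≤ (ν/2) L (d+3)^(3/2)`. -/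
theorem norm_gradient_gaussianSmoothing_sub_le (d : ℕ) (L ν : ℝ) (hL : 0 < L) (hν : 0 < ν)
    (f : EuclideanSpace ℝ (Fin d) → ℝ) (hf : Differentiable ℝ f)
    (hLip : ∀ x y, ‖gradient f x - gradient f y‖ ≤ L * ‖x - y‖)
    (x : EuclideanSpace ℝ (Fin d)) :
    ‖gradient (gaussianSmoothing d f ν) x - gradient f x‖
      ≤ ν / 2 * L * ((d : ℝ) + 3) ^ ((3 : ℝ) / 2) := by
  have hsmoothing : gaussianSmoothing d f ν
      = fun y => ∫ u, f (y + ν • u) ∂(ProbabilityTheory.stdGaussian _) := by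
    funext y
    rw [gaussianSmoothing, _root_.stdGaussian, MeasurableEquiv.coe_toLp, map_pi_eq_stdGaussian]
  have hf' : LipschitzWith L.toNNReal (fderiv ℝ f) :=
    lipschitzWith_fderiv_iff_gradient.2 <| .of_dist_le_mul fun a b => by
      simpa only [dist_eq_norm, Real.coe_toNNReal _ hL.le] using hLip a b
  rw [norm_gradient_sub_gradient_eq_norm_fderiv_sub, hsmoothing]
  calc _ ≤ L * |ν| * ∫ u, ‖u‖ ∂(ProbabilityTheory.stdGaussian _) := by
        simpa only [Real.coe_toNNReal _ hL.le] using
          norm_fderiv_integral_comp_add_smul_sub_le IsGaussian.memLp_two_id hf hf' x ν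
    _ ≤ L * ν * √d := by
        rw [abs_of_pos hν]
        grw [integral_norm_stdGaussian_le, finrank_euclideanSpace_fin]
    _ ≤ ν / 2 * L * ((d : ℝ) + 3) ^ ((3 : ℝ) / 2) := by
        grw [← two_mul_sqrt_le_add_three_rpow d.cast_nonneg]
        exact le_of_eq (by ring)
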